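/- Let K ≥ 1, let (μ_n) be a sequence of Borel probability measures on [0, K] converging weakly to a Borel probability measure μ on [0, K], and suppose that for every n the limit c(μ_n) := lim_{ε→0⁺} ∫_{(ε,K]} log λ dμ_n(λ) exists and satisfies c(μ_n) ≥ 0. Let σ_n(λ) := μ_n([0, λ]) and σ̲(λ) := liminf_{n→∞} σ_n(λ). Then ∫_0^K (σ̲(λ) − μ({0}))/λ dλ ≤ log K, and consequently limsup_{n→∞} μ_n({0}) = μ({0}). -/

import Mathlib

/-!
Testing weak convergence against the tent `x ↦ max 0 (1 - x / ε)` squeezes the atoms: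
`μ_n{0} ≤ ∫ tent dμ_n ≤ μ_n[0, ε]`. By Tonelli,
`∫_0^K μ(0, t] / t dt = ∫_{(0,K]} log (K / λ) dμ(λ) ≤ log K - c(μ) ≤ log K`.
Restricting the `t`-integral to `[ε, K]` gives the uniform bound
`μ_n(0, ε] ≤ log K / log (K / ε)`, so no mass of the `μ_n` can accumulate just to the right of `0`,
and `limsup μ_n{0} = μ{0}`. Then `σ_n(λ) ≤ μ_n{0} + μ_n(0, λ]` gives
`σ̲(λ) - μ{0} ≤ liminf_n μ_n(0, λ]`, and Fatou's lemma transfers the bound `log K` to the integral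
of `(σ̲ - μ{0}) / λ`.
-/

open MeasureTheory Filter Set
open scoped ENNReal
open Real Topology

noncomputable def tent (ε x : ℝ) : ℝ := max 0 (1 - x / ε)

lemma continuous_tent (ε : ℝ) : Continuous (tent ε) := by
  unfold tent; fun_prop

lemma indicator_singleton_zero_le_tent (ε x : ℝ) :
    ({0} : Set ℝ).indicator 1 x ≤ tent ε x := by
  by_cases hx : x = 0 <;> simp [hx, tent]

lemma tent_le_indicator_Icc {ε x : ℝ} (hε : 0 < ε) (hx : 0 ≤ x) :
    tent ε x ≤ (Icc 0 ε).indicator 1 x := by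
  by_cases hxε : x ≤ ε
  · rw [indicator_of_mem (show x ∈ Icc 0 ε from ⟨hx, hxε⟩), Pi.one_apply]
    exact max_le zero_le_one (by linarith [div_nonneg hx hε.le])
  · rw [indicator_of_notMem fun h : x ∈ Icc 0 ε => hxε h.2]
    exact max_le le_rfl (by linarith [(one_lt_div hε).2 (not_le.1 hxε)])

lemma measureReal_singleton_zero_le_integral_tent (m : Measure ℝ) [IsFiniteMeasure m] {K ε : ℝ}
    (hK : 0 ≤ K) : m.real {0} ≤ ∫ x in Icc 0 K, tent ε x ∂m :=
  calc m.real {0} = ∫ x in Icc 0 K, ({0} : Set ℝ).indicator 1 x ∂m := by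
        rw [integral_indicator_one (measurableSet_singleton 0),
          measureReal_restrict_apply (measurableSet_singleton 0),
          singleton_inter_of_mem (show (0 : ℝ) ∈ Icc 0 K from ⟨le_rfl, hK⟩)]
    _ ≤ ∫ x in Icc 0 K, tent ε x ∂m :=
        integral_mono ((integrable_const 1).indicator (measurableSet_singleton 0))
          (continuous_tent ε).integrableOn_Icc (indicator_singleton_zero_le_tent ε)

lemma integral_tent_le_measureReal_Icc (m : Measure ℝ) [IsFiniteMeasure m] {K ε : ℝ}
    (hε : 0 < ε) : ∫ x in Icc 0 K, tent ε x ∂m ≤ m.real (Icc 0 ε) :=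
  calc ∫ x in Icc 0 K, tent ε x ∂m ≤ ∫ x in Icc 0 K, (Icc 0 ε).indicator 1 x ∂m :=
        setIntegral_mono_on (continuous_tent ε).integrableOn_Icc
          ((integrable_const 1).indicator measurableSet_Icc) measurableSet_Icc
          fun x hx => tent_le_indicator_Icc hε hx.1
    _ = m.real (Icc 0 ε ∩ Icc 0 K) := by
        rw [integral_indicator_one measurableSet_Icc, measureReal_restrict_apply measurableSet_Icc]
    _ ≤ m.real (Icc 0 ε) := measureReal_mono inter_subset_left

lemma measureReal_Icc_zero_le_add (m : Measure ℝ) {t : ℝ} (ht : 0 ≤ t) :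
    m.real (Icc 0 t) ≤ m.real {0} + m.real (Ioc 0 t) := by
  rw [← Ioc_insert_left ht, insert_eq]
  exact measureReal_union_le _ _

section Bounded

variable {ι α : Type*} [MeasurableSpace α] {l : Filter ι} (μ : ι → Measure α) (s : Set α)

lemma isBoundedUnder_le_measureReal [∀ i, IsProbabilityMeasure (μ i)] :
    IsBoundedUnder (· ≤ ·) l fun i => (μ i).real s :=
  isBoundedUnder_of_eventually_le (Eventually.of_forall fun _ => measureReal_le_one)

lemma isBoundedUnder_ge_measureReal : IsBoundedUnder (· ≥ ·) l fun i => (μ i).real s :=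
  isBoundedUnder_of_eventually_ge (Eventually.of_forall fun _ => measureReal_nonneg)

end Bounded

lemma tendsto_measure_Ioc_nhdsGT_zero (ρ : Measure ℝ) (b : ℝ) :
    Tendsto (fun δ => ρ (Ioc δ b)) (𝓝[>] 0) (𝓝 (ρ (Ioc 0 b))) := by
  have hunion : ⋃ s : ℝ, Ioc (exp s) b = Ioc 0 b := by
    ext x
    simp only [mem_iUnion, mem_Ioc]
    refine ⟨fun ⟨s, hs⟩ => ⟨(exp_pos s).trans hs.1, hs.2⟩, fun hx => ?_⟩
    obtain ⟨s, hs⟩ := (tendsto_exp_atBot.eventually (gt_mem_nhds hx.1)).exists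
    exact ⟨s, hs, hx.2⟩
  -- continuity from below needs a monotone family over an order with `atBot`; take `δ = exp s`
  have hexp := tendsto_measure_iUnion_atBot (μ := ρ)
    (fun s t hst => Ioc_subset_Ioc_left (exp_le_exp.2 hst) : Antitone fun s => Ioc (exp s) b)
  rw [hunion] at hexp
  refine (hexp.comp tendsto_log_nhdsGT_zero).congr' ?_
  filter_upwards [self_mem_nhdsWithin] with δ (hδ : 0 < δ)
  simp [exp_log hδ]

lemma lintegral_Icc_inv {a b : ℝ} (ha : 0 < a) (hab : a ≤ b) :
    ∫⁻ t in Icc a b, (ENNReal.ofReal t)⁻¹ = ENNReal.ofReal (log b - log a) := by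
  have hpos : ∀ t ∈ Icc a b, 0 < t := fun t ht => ha.trans_le ht.1
  calc ∫⁻ t in Icc a b, (ENNReal.ofReal t)⁻¹ = ∫⁻ t in Icc a b, ENNReal.ofReal t⁻¹ :=
        setLIntegral_congr_fun measurableSet_Icc fun t ht =>
          (ENNReal.ofReal_inv_of_pos (hpos t ht)).symm
    _ = ENNReal.ofReal (∫ t in Icc a b, t⁻¹) :=
        (ofReal_integral_eq_lintegral_ofReal
          ((continuousOn_inv₀.mono fun t ht => (hpos t ht).ne').integrableOn_Icc)
          (ae_restrict_of_forall_mem measurableSet_Icc fun t ht => (inv_pos.2 (hpos t ht)).le)).symm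
    _ = ENNReal.ofReal (log b - log a) := by
        rw [integral_Icc_eq_integral_Ioc, ← intervalIntegral.integral_of_le hab,
          integral_inv_of_pos ha (ha.trans_le hab), log_div (ha.trans_le hab).ne' ha.ne']

lemma lintegral_measure_Ioc_mul_inv (m : Measure ℝ) [SFinite m] (K : ℝ) :
    ∫⁻ t in Ioc 0 K, m (Ioc 0 t) * (ENNReal.ofReal t)⁻¹ =
      ∫⁻ x in Ioc 0 K, ENNReal.ofReal (log K - log x) ∂m := by
  let f : ℝ → ℝ → ℝ≥0∞ := fun t x => (Iic t).indicator (fun _ => (ENNReal.ofReal t)⁻¹) x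
  have hf : Measurable (Function.uncurry f) := by
    simp only [f, Function.uncurry_def, indicator_apply, mem_Iic]
    exact Measurable.ite (measurableSet_le measurable_snd measurable_fst) (by fun_prop)
      measurable_const
  calc ∫⁻ t in Ioc 0 K, m (Ioc 0 t) * (ENNReal.ofReal t)⁻¹
      = ∫⁻ t in Ioc 0 K, ∫⁻ x in Ioc 0 K, f t x ∂m := by
        refine setLIntegral_congr_fun measurableSet_Ioc fun t ht => ?_
        rw [lintegral_indicator_const measurableSet_Iic, Measure.restrict_apply measurableSet_Iic,
          inter_comm, Ioc_inter_Iic, min_eq_right ht.2, mul_comm]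
    _ = ∫⁻ x in Ioc 0 K, ∫⁻ t in Ioc 0 K, f t x ∂volume ∂m :=
        lintegral_lintegral_swap hf.aemeasurable
    _ = ∫⁻ x in Ioc 0 K, ENNReal.ofReal (log K - log x) ∂m := by
        refine setLIntegral_congr_fun measurableSet_Ioc fun x hx => ?_
        have hf' : ∀ t, f t x = (Ici x).indicator (fun t => (ENNReal.ofReal t)⁻¹) t := by
          simp [f, indicator_apply]
        have hIcc : Ici x ∩ Ioc 0 K = Icc x K := by
          ext t
          simp only [mem_inter_iff, mem_Ici, mem_Ioc, mem_Icc]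
          exact ⟨fun h => ⟨h.1, h.2.2⟩, fun h => ⟨h.1, hx.1.trans_le h.1, h.2⟩⟩
        simp only [hf']
        rw [lintegral_indicator measurableSet_Ici, Measure.restrict_restrict measurableSet_Ici,
          hIcc, lintegral_Icc_inv hx.1 hx.2]

lemma integrableOn_log_Ioc (m : Measure ℝ) [IsFiniteMeasure m] {a b : ℝ} (ha : 0 < a) :
    IntegrableOn log (Ioc a b) m :=
  ((continuousOn_log.mono fun _ hx => (ha.trans_le hx.1).ne').integrableOn_Icc).mono_set
    Ioc_subset_Icc_self

lemma lintegral_measure_Ioc_mul_inv_le (m : Measure ℝ) [IsProbabilityMeasure m] {K c : ℝ}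
    (hK : 1 ≤ K) (hc : Tendsto (fun ε => ∫ x in Ioc ε K, log x ∂m) (𝓝[>] 0) (𝓝 c)) :
    ∫⁻ t in Ioc 0 K, m (Ioc 0 t) * (ENNReal.ofReal t)⁻¹ ≤ ENNReal.ofReal (log K - c) := by
  rw [lintegral_measure_Ioc_mul_inv]
  have hρ := tendsto_measure_Ioc_nhdsGT_zero
    (m.withDensity fun x => ENNReal.ofReal (log K - log x)) K
  simp only [withDensity_apply _ measurableSet_Ioc] at hρ
  refine le_of_tendsto_of_tendsto hρ (ENNReal.tendsto_ofReal (tendsto_const_nhds.sub hc)) ?_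
  filter_upwards [self_mem_nhdsWithin] with δ (hδ : 0 < δ)
  have hlog : IntegrableOn log (Ioc δ K) m := integrableOn_log_Ioc m hδ
  have hconst : IntegrableOn (fun _ => log K) (Ioc δ K) m := integrableOn_const
  have hnonneg : ∀ x ∈ Ioc δ K, 0 ≤ log K - log x := fun x hx =>
    sub_nonneg.2 (log_le_log (hδ.trans hx.1) hx.2)
  rw [← ofReal_integral_eq_lintegral_ofReal (f := fun x => log K - log x) (hconst.sub hlog)
    (ae_restrict_of_forall_mem measurableSet_Ioc hnonneg), integral_sub hconst hlog,
    setIntegral_const, smul_eq_mul]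
  gcongr
  exact mul_le_of_le_one_left (log_nonneg hK) measureReal_le_one

lemma measure_Ioc_mul_ofReal_log_sub_log_le (m : Measure ℝ) {ε K : ℝ} (hε : 0 < ε)
    (hεK : ε ≤ K) :
    m (Ioc 0 ε) * ENNReal.ofReal (log K - log ε) ≤
      ∫⁻ t in Ioc 0 K, m (Ioc 0 t) * (ENNReal.ofReal t)⁻¹ :=
  calc m (Ioc 0 ε) * ENNReal.ofReal (log K - log ε)
      = ∫⁻ t in Icc ε K, m (Ioc 0 ε) * (ENNReal.ofReal t)⁻¹ := by
        rw [lintegral_const_mul _ (by fun_prop), lintegral_Icc_inv hε hεK]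
    _ ≤ ∫⁻ t in Icc ε K, m (Ioc 0 t) * (ENNReal.ofReal t)⁻¹ :=
        setLIntegral_mono' measurableSet_Icc fun t ht => by
          gcongr
          exact ht.1
    _ ≤ ∫⁻ t in Ioc 0 K, m (Ioc 0 t) * (ENNReal.ofReal t)⁻¹ :=
        lintegral_mono_set (Icc_subset_Ioc_iff hεK |>.2 ⟨hε, le_rfl⟩)

lemma measureReal_Ioc_zero_le_log_div (m : Measure ℝ) [IsProbabilityMeasure m] {K c ε : ℝ}
    (hK : 1 ≤ K) (hc : Tendsto (fun ε => ∫ x in Ioc ε K, log x ∂m) (𝓝[>] 0) (𝓝 c))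
    (hc0 : 0 ≤ c) (hε : 0 < ε) (hεK : ε < K) :
    m.real (Ioc 0 ε) ≤ log K / (log K - log ε) := by
  have hgap : 0 < log K - log ε := sub_pos.2 (log_lt_log hε hεK)
  have h := ENNReal.toReal_mono ENNReal.ofReal_ne_top
    ((measure_Ioc_mul_ofReal_log_sub_log_le m hε hεK.le).trans
      (lintegral_measure_Ioc_mul_inv_le m hK hc))
  rw [ENNReal.toReal_mul, ENNReal.toReal_ofReal hgap.le, ENNReal.toReal_ofReal'] at h
  rw [le_div_iff₀ hgap]
  exact h.trans (max_le (by linarith) (log_nonneg hK))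

lemma tendsto_log_div_log_sub_log_nhdsGT_zero (K : ℝ) :
    Tendsto (fun ε => log K / (log K - log ε)) (𝓝[>] 0) (𝓝 0) :=
  tendsto_const_nhds.div_atTop <| by
    simpa only [sub_eq_add_neg, Function.comp_def] using
      tendsto_atTop_add_const_left _ (log K) (tendsto_neg_atBot_atTop.comp tendsto_log_nhdsGT_zero)

section Atom

variable {μ : ℕ → Measure ℝ} [∀ n, IsProbabilityMeasure (μ n)] {ν : Measure ℝ} [IsFiniteMeasure ν]
  {K : ℝ}

lemma limsup_measureReal_singleton_zero_le (hK : 0 ≤ K)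
    (htent : ∀ ε, Tendsto (fun n => ∫ x in Icc 0 K, tent ε x ∂μ n) atTop
      (𝓝 (∫ x in Icc 0 K, tent ε x ∂ν))) :
    limsup (fun n => (μ n).real {0}) atTop ≤ ν.real {0} := by
  have hν : Tendsto (fun ε => ν.real (Icc (0 - ε) (0 + ε))) (𝓝[>] 0) (𝓝 (ν.real {0})) :=
    (ENNReal.tendsto_toReal (measure_ne_top ν _)).comp (tendsto_measure_Icc_nhdsWithin_right' ν 0)
  refine ge_of_tendsto hν ?_
  filter_upwards [self_mem_nhdsWithin] with ε (hε : 0 < ε)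
  calc limsup (fun n => (μ n).real {0}) atTop
      ≤ limsup (fun n => ∫ x in Icc 0 K, tent ε x ∂μ n) atTop :=
        limsup_le_limsup (Eventually.of_forall fun n =>
            measureReal_singleton_zero_le_integral_tent (μ n) hK)
          (isBoundedUnder_ge_measureReal μ _).isCoboundedUnder_le (htent ε).isBoundedUnder_le
    _ = ∫ x in Icc 0 K, tent ε x ∂ν := (htent ε).limsup_eq
    _ ≤ ν.real (Icc 0 ε) := integral_tent_le_measureReal_Icc ν hε
    _ ≤ ν.real (Icc (0 - ε) (0 + ε)) :=
        measureReal_mono (Icc_subset_Icc (by linarith) (by linarith))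

lemma le_limsup_measureReal_singleton_zero (hK : 0 ≤ K) {B : ℝ → ℝ}
    (hB : Tendsto B (𝓝[>] 0) (𝓝 0)) (hμB : ∀ᶠ ε in 𝓝[>] 0, ∀ n, (μ n).real (Ioc 0 ε) ≤ B ε)
    (htent : ∀ ε, Tendsto (fun n => ∫ x in Icc 0 K, tent ε x ∂μ n) atTop
      (𝓝 (∫ x in Icc 0 K, tent ε x ∂ν))) :
    ν.real {0} ≤ limsup (fun n => (μ n).real {0}) atTop := by
  set L := limsup (fun n => (μ n).real {0}) atTop
  refine ge_of_tendsto (by simpa using tendsto_const_nhds (x := L) |>.add hB) ?_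
  filter_upwards [self_mem_nhdsWithin, hμB] with ε (hε : 0 < ε) hεB
  have htent_le : ∀ n, ∫ x in Icc 0 K, tent ε x ∂μ n ≤ (μ n).real {0} + B ε := fun n =>
    calc ∫ x in Icc 0 K, tent ε x ∂μ n ≤ (μ n).real (Icc 0 ε) :=
          integral_tent_le_measureReal_Icc (μ n) hε
      _ ≤ (μ n).real {0} + (μ n).real (Ioc 0 ε) := measureReal_Icc_zero_le_add (μ n) hε.le
      _ ≤ (μ n).real {0} + B ε := by linarith [hεB n]
  calc ν.real {0} ≤ ∫ x in Icc 0 K, tent ε x ∂ν := measureReal_singleton_zero_le_integral_tent ν hK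
    _ = limsup (fun n => ∫ x in Icc 0 K, tent ε x ∂μ n) atTop := (htent ε).limsup_eq.symm
    _ ≤ limsup (fun n => (μ n).real {0} + B ε) atTop :=
        limsup_le_limsup (Eventually.of_forall htent_le)
          (htent ε).isBoundedUnder_ge.isCoboundedUnder_le
          (isBoundedUnder_le_add (isBoundedUnder_le_measureReal μ _) (isBoundedUnder_const))
    _ = L + B ε := limsup_add_const _ _ _ (isBoundedUnder_le_measureReal μ _)
          (isBoundedUnder_ge_measureReal μ _).isCoboundedUnder_le

end Atom

lemma liminf_measureReal_Icc_zero_le_add (μ : ℕ → Measure ℝ) [∀ n, IsProbabilityMeasure (μ n)]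
    {t : ℝ} (ht : 0 ≤ t) :
    liminf (fun n => (μ n).real (Icc 0 t)) atTop ≤
      limsup (fun n => (μ n).real {0}) atTop + liminf (fun n => (μ n).real (Ioc 0 t)) atTop :=
  (liminf_le_liminf (Eventually.of_forall fun n => measureReal_Icc_zero_le_add (μ n) ht)
      (isBoundedUnder_ge_measureReal μ _)
      (isBoundedUnder_le_add (isBoundedUnder_le_measureReal μ _)
        (isBoundedUnder_le_measureReal μ _)).isCoboundedUnder_ge).trans
    (liminf_add_le (isBoundedUnder_ge_measureReal μ _) (isBoundedUnder_le_measureReal μ _)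
      (isBoundedUnder_ge_measureReal μ _) (isBoundedUnder_le_measureReal μ _).isCoboundedUnder_ge)

lemma ofReal_div_le_liminf_measure_mul_inv (μ : ℕ → Measure ℝ) [∀ n, IsProbabilityMeasure (μ n)]
    {s : Set ℝ} {t x : ℝ} (ht : 0 < t) (hx : x ≤ liminf (fun n => (μ n).real s) atTop) :
    ENNReal.ofReal (x / t) ≤ liminf (fun n => μ n s * (ENNReal.ofReal t)⁻¹) atTop := by
  rw [ENNReal.liminf_mul_const_of_ne_top (ENNReal.inv_ne_top.2 (ENNReal.ofReal_pos.2 ht).ne'),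
    ENNReal.ofReal_div_of_pos ht, div_eq_mul_inv, mul_comm]
  gcongr
  calc ENNReal.ofReal x ≤ ENNReal.ofReal (liminf (fun n => (μ n).real s) atTop) :=
        ENNReal.ofReal_le_ofReal hx
    _ = ENNReal.ofReal (liminf (fun n => μ n s) atTop).toReal := by
        rw [← ENNReal.liminf_toReal_eq ENNReal.one_ne_top
          (Eventually.of_forall fun _ => prob_le_one)]
        rfl
    _ ≤ liminf (fun n => μ n s) atTop := ENNReal.ofReal_toReal_le

theorem liminf_distribution_integral_bound_and_limsup_atom_general
    (K : ℝ) (hK : 1 ≤ K)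
    (μ : ℕ → Measure ℝ) (ν : Measure ℝ)
    (hμprob : ∀ n, IsProbabilityMeasure (μ n))
    (hνprob : IsProbabilityMeasure ν)
    (hweak : ∀ f : ℝ → ℝ, ContinuousOn f (Set.Icc 0 K) →
      Filter.Tendsto (fun n => ∫ x in Set.Icc 0 K, f x ∂(μ n)) Filter.atTop
        (nhds (∫ x in Set.Icc 0 K, f x ∂ν)))
    (c : ℕ → ℝ)
    (hc : ∀ n, Filter.Tendsto (fun ε : ℝ => ∫ x in Set.Ioc ε K, Real.log x ∂(μ n))
      (nhdsWithin 0 (Set.Ioi 0)) (nhds (c n)))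
    (hc0 : ∀ n, 0 ≤ c n)
    (σlow : ℝ → ℝ)
    (hlow : ∀ lam, σlow lam =
      Filter.liminf (fun n => ((μ n) (Set.Icc 0 lam)).toReal) Filter.atTop) :
    (∫⁻ lam in Set.Ioc 0 K, ENNReal.ofReal ((σlow lam - (ν {0}).toReal) / lam) ≤
      ENNReal.ofReal (Real.log K)) ∧
    Filter.limsup (fun n => ((μ n) {0}).toReal) Filter.atTop = (ν {0}).toReal := by
  have htent := fun ε => hweak (tent ε) (continuous_tent ε).continuousOn
  have hatom : limsup (fun n => (μ n).real {0}) atTop = ν.real {0} := by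
    refine le_antisymm (limsup_measureReal_singleton_zero_le (by linarith) htent)
      (le_limsup_measureReal_singleton_zero (by linarith)
        (tendsto_log_div_log_sub_log_nhdsGT_zero K) ?_ htent)
    filter_upwards [Ioo_mem_nhdsGT one_pos] with ε hε n
    exact measureReal_Ioc_zero_le_log_div (μ n) hK (hc n) (hc0 n) hε.1 (hε.2.trans_le hK)
  refine ⟨?_, hatom⟩
  calc ∫⁻ t in Ioc 0 K, ENNReal.ofReal ((σlow t - ν.real {0}) / t)
      ≤ ∫⁻ t in Ioc 0 K, liminf (fun n => μ n (Ioc 0 t) * (ENNReal.ofReal t)⁻¹) atTop :=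
        setLIntegral_mono' measurableSet_Ioc fun t ht =>
          ofReal_div_le_liminf_measure_mul_inv μ ht.1 <| by
            rw [hlow, ← hatom, sub_le_iff_le_add']
            exact liminf_measureReal_Icc_zero_le_add μ ht.1.le
    _ ≤ liminf (fun n => ∫⁻ t in Ioc 0 K, μ n (Ioc 0 t) * (ENNReal.ofReal t)⁻¹) atTop :=
        lintegral_liminf_le fun n =>
          (Monotone.measurable fun _ _ hst => measure_mono (Ioc_subset_Ioc_right hst)).mul
            (by fun_prop)
    _ ≤ ENNReal.ofReal (log K) :=
        liminf_le_of_frequently_le <| Frequently.of_forall fun n =>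
          (lintegral_measure_Ioc_mul_inv_le (μ n) hK (hc n)).trans
            (ENNReal.ofReal_le_ofReal (by linarith [hc0 n]))

/-- If probability measures `μ n` on `[0, K]` (with `K ≥ 1`) converge weakly to `ν`, and
for every `n` the limit `c n = lim_{ε→0⁺} ∫_{(ε,K]} log λ dμ_n(λ)` exists and is
nonnegative, then, with `σlow` the pointwise liminf of the distribution functions of the
`μ n`, one has `∫_0^K (σlow(λ) - ν({0}))/λ dλ ≤ log K`, and consequently
`limsup_n μ_n({0}) = ν({0})`. -/
theorem liminf_distribution_integral_bound_and_limsup_atom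
    (K : ℝ) (hK : 1 ≤ K)
    (μ : ℕ → Measure ℝ) (ν : Measure ℝ)
    (hμprob : ∀ n, IsProbabilityMeasure (μ n))
    (hνprob : IsProbabilityMeasure ν)
    (hμsupp : ∀ n, (μ n) (Set.Icc 0 K)ᶜ = 0)
    (hνsupp : ν (Set.Icc 0 K)ᶜ = 0)
    (hweak : ∀ f : ℝ → ℝ, ContinuousOn f (Set.Icc 0 K) →
      Filter.Tendsto (fun n => ∫ x in Set.Icc 0 K, f x ∂(μ n)) Filter.atTop
        (nhds (∫ x in Set.Icc 0 K, f x ∂ν)))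
    (c : ℕ → ℝ)
    (hc : ∀ n, Filter.Tendsto (fun ε : ℝ => ∫ x in Set.Ioc ε K, Real.log x ∂(μ n))
      (nhdsWithin 0 (Set.Ioi 0)) (nhds (c n)))
    (hc0 : ∀ n, 0 ≤ c n)
    (σlow : ℝ → ℝ)
    (hlow : ∀ lam, σlow lam =
      Filter.liminf (fun n => ((μ n) (Set.Icc 0 lam)).toReal) Filter.atTop) :
    (∫⁻ lam in Set.Ioc 0 K, ENNReal.ofReal ((σlow lam - (ν {0}).toReal) / lam) ≤
      ENNReal.ofReal (Real.log K)) ∧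
    Filter.limsup (fun n => ((μ n) {0}).toReal) Filter.atTop = (ν {0}).toReal :=
  liminf_distribution_integral_bound_and_limsup_atom_general K hK μ ν hμprob hνprob hweak c hc hc0
    σlow hlow
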